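/- arXiv:2602.02254 — 3 statements merged into one kernel-verified Lean document; each statement's English description precedes it below -/
import Mathlib

section
/- Rural Hospitals (Lone-Wolf) Theorem: In any stable matching instance with strict (possibly incomplete) preference lists, if an agent is unmatched in some stable matching, then that agent is unmatched in every stable matching. -/
/-- A stable matching instance: each resident has a preference list over hospitals
and each hospital has a preference list over residents. -/
structure SMInstance (R H : Type*) where
  Lr : R → List H
  Lh : H → List R

/-- A (partial) matching, given by mutually consistent partner functions. -/
structure SMatching (R H : Type*) where
  mr : R → Option H
  mh : H → Option R
  consistent : ∀ r h, mr r = some h ↔ mh h = some r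

/-- An agent with preference list `l`, currently matched according to `o`,
strictly prefers `x` to its current situation: `x` is acceptable, and the agent
is either unmatched or ranks `x` above its current partner. -/
def prefersOver {α : Type*} [DecidableEq α] (l : List α) (x : α) (o : Option α) : Prop :=
  x ∈ l ∧ ∀ y, o = some y → l.idxOf x < l.idxOf y

/-- With respect to list `l`, outcome `o₁` is weakly preferred to outcome `o₂`:
whenever `o₂` is matched, so is `o₁`, to a partner of weakly better rank. -/
def weaklyPrefers {α : Type*} [DecidableEq α] (l : List α) (o₁ o₂ : Option α) : Prop :=
  ∀ y, o₂ = some y → ∃ x, o₁ = some x ∧ l.idxOf x ≤ l.idxOf y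

variable {R H : Type*} [DecidableEq R] [DecidableEq H]

/-- `(r, h)` is a blocking pair for `μ` in instance `I`. -/
def SMInstance.Blocking (I : SMInstance R H) (μ : SMatching R H) (r : R) (h : H) : Prop :=
  prefersOver (I.Lr r) h (μ.mr r) ∧ prefersOver (I.Lh h) r (μ.mh h)

/-- The matching `μ` exists in the instance `I`: matched partners are on each other's lists. -/
def SMInstance.ExistsIn (I : SMInstance R H) (μ : SMatching R H) : Prop :=
  (∀ r h, μ.mr r = some h → h ∈ I.Lr r) ∧ (∀ h r, μ.mh h = some r → r ∈ I.Lh h)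

/-- `μ` is stable in `I`: it exists in `I` and admits no blocking pair. -/
def SMInstance.IsStable (I : SMInstance R H) (μ : SMatching R H) : Prop :=
  I.ExistsIn μ ∧ ∀ r h, ¬ I.Blocking μ r h

/-- Preference lists are strict (no repetitions). -/
def SMInstance.Nodups (I : SMInstance R H) : Prop :=
  (∀ r, (I.Lr r).Nodup) ∧ (∀ h, (I.Lh h).Nodup)

/-- Preference lists are complete: every agent ranks every agent on the other side. -/
def SMInstance.Complete (I : SMInstance R H) : Prop :=
  (∀ r h, h ∈ I.Lr r) ∧ (∀ h r, r ∈ I.Lh h)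

/-!
Fix two stable matchings `μ, ν` and let `P` be the set of residents who strictly prefer their
`μ`-partner to their situation in `ν`. If `r ∈ P` is matched to `h` in `μ`, stability of `ν`
forces `h` to be matched in `ν` to some `r'` it prefers to `r`, and then stability of `μ` forces
`r' ∈ P`. The map `r ↦ r'` is an injection of the finite set `P` into itself, hence a bijection,
so every resident of `P` is matched in `ν`. A resident matched in `μ` but not in `ν` would lie in
`P`. Exchanging the roles of residents and hospitals gives the statement for hospitals.
-/

lemma prefersOver_some_iff {α : Type*} [DecidableEq α] {l : List α} {x y : α} :
    prefersOver l x (some y) ↔ x ∈ l ∧ l.idxOf x < l.idxOf y := by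
  simp [prefersOver]

def SMInstance.dual {R H : Type*} (I : SMInstance R H) : SMInstance H R := ⟨I.Lh, I.Lr⟩

def SMatching.dual {R H : Type*} (μ : SMatching R H) : SMatching H R :=
  ⟨μ.mh, μ.mr, fun h r => (μ.consistent r h).symm⟩

lemma SMatching.eq_of_mr_eq_some {R H : Type*} (μ : SMatching R H) {r s : R} {h : H}
    (hr : μ.mr r = some h) (hs : μ.mr s = some h) : r = s :=
  Option.some.inj (((μ.consistent r h).mp hr).symm.trans ((μ.consistent s h).mp hs))

namespace SMInstance

variable {I : SMInstance R H} {μ ν : SMatching R H}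

lemma IsStable.dual (hμ : I.IsStable μ) : I.dual.IsStable μ.dual :=
  ⟨⟨hμ.1.2, hμ.1.1⟩, fun h r hb => hμ.2 r h ⟨hb.2, hb.1⟩⟩

lemma IsStable.exists_mr_prefersOver (hμ : I.IsStable μ) {r : R} {h : H} (hr : h ∈ I.Lr r)
    (hh : prefersOver (I.Lh h) r (μ.mh h)) :
    ∃ h', μ.mr r = some h' ∧ prefersOver (I.Lr r) h' (some h) := by
  have hnot : ¬ prefersOver (I.Lr r) h (μ.mr r) := fun hpr => hμ.2 r h ⟨hpr, hh⟩
  simp only [prefersOver, hr, true_and, not_forall, not_lt] at hnot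
  obtain ⟨h', hh', hle⟩ := hnot
  have hne : h' ≠ h := by
    rintro rfl
    simpa using hh.2 r ((μ.consistent r h').mp hh')
  have hmem : h' ∈ I.Lr r := hμ.1.1 r h' hh'
  exact ⟨h', hh', prefersOver_some_iff.mpr
    ⟨hmem, lt_of_le_of_ne hle fun e => hne ((List.idxOf_inj hmem).mp e)⟩⟩

lemma IsStable.exists_mh_prefersOver (hμ : I.IsStable μ) {r : R} {h : H} (hh : r ∈ I.Lh h)
    (hr : prefersOver (I.Lr r) h (μ.mr r)) :
    ∃ r', μ.mh h = some r' ∧ prefersOver (I.Lh h) r' (some r) :=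
  hμ.dual.exists_mr_prefersOver (I := I.dual) hh hr

def residentsPreferring (I : SMInstance R H) (μ ν : SMatching R H) : Set R :=
  {r | ∃ h, μ.mr r = some h ∧ prefersOver (I.Lr r) h (ν.mr r)}

lemma exists_mr_eq_of_mem_residentsPreferring (hμ : I.IsStable μ) (hν : I.IsStable ν)
    {r : R} (hr : r ∈ I.residentsPreferring μ ν) :
    ∃ r' ∈ I.residentsPreferring μ ν, ν.mr r' = μ.mr r := by
  obtain ⟨h, hrh, hpr⟩ := hr
  have hμh : μ.mh h = some r := (μ.consistent r h).mp hrh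
  obtain ⟨r', hνh, hr'⟩ := hν.exists_mh_prefersOver (hμ.1.2 h r hμh) hpr
  have hνr' : ν.mr r' = some h := (ν.consistent r' h).mpr hνh
  obtain ⟨h', hμr', hh'⟩ := hμ.exists_mr_prefersOver (hν.1.1 r' h hνr') (hμh ▸ hr')
  exact ⟨r', ⟨h', hμr', hνr' ▸ hh'⟩, hνr'.trans hrh.symm⟩

lemma IsStable.mr_eq_none_of_mr_eq_none [Finite R] (hμ : I.IsStable μ) (hν : I.IsStable ν)
    {r₀ : R} (hr₀ : ν.mr r₀ = none) : μ.mr r₀ = none := by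
  by_contra hμr₀
  obtain ⟨h₀, hh₀⟩ := Option.ne_none_iff_exists'.mp hμr₀
  set P := I.residentsPreferring μ ν
  have hr₀P : r₀ ∈ P := ⟨h₀, hh₀, hμ.1.1 r₀ h₀ hh₀, by simp [hr₀]⟩
  choose φ hφ using fun r : P =>
    exists_mr_eq_of_mem_residentsPreferring hμ hν r.2
  have hφ_inj : Function.Injective fun r : P => (⟨φ r, (hφ r).1⟩ : P) := fun r s hrs => by
    obtain ⟨h, hrh, -⟩ := r.2
    have hsh : μ.mr s = some h := by
      have hφrs : φ r = φ s := congrArg Subtype.val hrs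
      rw [← (hφ s).2, ← hφrs, (hφ r).2, hrh]
    exact Subtype.ext (μ.eq_of_mr_eq_some hrh hsh)
  obtain ⟨r, hr⟩ := Finite.surjective_of_injective hφ_inj ⟨r₀, hr₀P⟩
  obtain ⟨h, hrh, -⟩ := r.2
  have hφr : φ r = r₀ := congrArg Subtype.val hr
  have hνr₀ : ν.mr r₀ = some h := by rw [← hφr, (hφ r).2, hrh]
  simp [hr₀] at hνr₀

end SMInstance

theorem rural_hospitals_general
    {R H : Type*} [DecidableEq R] [DecidableEq H] [Fintype R] [Fintype H]
    (I : SMInstance R H)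
    (μ ν : SMatching R H) (hμ : I.IsStable μ) (hν : I.IsStable ν) :
    (∀ r, μ.mr r = none → ν.mr r = none) ∧ (∀ h, μ.mh h = none → ν.mh h = none) :=
  ⟨fun _ => hν.mr_eq_none_of_mr_eq_none hμ,
    fun _ => hν.dual.mr_eq_none_of_mr_eq_none (I := I.dual) hμ.dual⟩

/-- **Rural Hospitals / Lone-Wolf Theorem.** In any stable matching instance
with strict (possibly incomplete) preference lists, an agent unmatched in some stable
matching is unmatched in every stable matching. -/
theorem rural_hospitals
    {R H : Type*} [DecidableEq R] [DecidableEq H] [Fintype R] [Fintype H]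
    (I : SMInstance R H) (hN : I.Nodups)
    (μ ν : SMatching R H) (hμ : I.IsStable μ) (hν : I.IsStable ν) :
    (∀ r, μ.mr r = none → ν.mr r = none) ∧ (∀ h, μ.mh h = none → ν.mh h = none) :=
  rural_hospitals_general I μ ν hμ hν
end

section
/- WDA correctness: Let I be a stable matching instance with complete lists on both sides, μ a stable matching in I, and Î the instance obtained by truncating each hospital h's list to a contiguous window of its original list containing μ(h), with residents' lists restricted consistently. Then the resident-optimal stable matching μ̂ of Î is stable in I and matches all residents. -/
variable {R H : Type*} [DecidableEq R] [DecidableEq H]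

/-!
Let `μ'` denote the resident-optimal stable matching of the truncated instance. Since `μ` survives
the truncation it is stable there too, so every resident is matched in `μ'` at least as well as in
`μ`; in particular `μ'` is perfect. Suppose `(r, h)` blocks `μ'` in the complete instance. If `r`
lies in the window of `h`, the pair already blocks `μ'` in the truncated instance. Otherwise `h`
prefers `r` to its partner in `μ'`, which lies in the window, so `r` lies before the whole window
and `h` also prefers `r` to `μ(h)`; as `r` prefers `h` to `μ'(r)`, hence to `μ(r)`, the pair
`(r, h)` would block `μ` in the complete instance.
-/

open scoped List

namespace List

variable {α : Type*} [DecidableEq α]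

theorem Sublist.idxOf_lt_idxOf_iff {l₁ l₂ : List α} (hs : l₁ <+ l₂) (hl : l₂.Nodup) {x y : α}
    (hx : x ∈ l₁) (hy : y ∈ l₁) : l₁.idxOf x < l₁.idxOf y ↔ l₂.idxOf x < l₂.idxOf y := by
  induction hs with
  | slnil => simp at hx
  | cons a _ ih => grind
  | cons_cons a _ ih => grind

theorem Sublist.idxOf_le_idxOf_iff {l₁ l₂ : List α} (hs : l₁ <+ l₂) (hl : l₂.Nodup) {x y : α}
    (hx : x ∈ l₁) (hy : y ∈ l₁) : l₁.idxOf x ≤ l₁.idxOf y ↔ l₂.idxOf x ≤ l₂.idxOf y := by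
  simpa only [not_lt] using (hs.idxOf_lt_idxOf_iff hl hy hx).not

theorem Nodup.mem_take_drop_iff {l : List α} (hl : l.Nodup) {k n : ℕ} {x : α} (hx : x ∈ l) :
    x ∈ (l.drop k).take n ↔ k ≤ l.idxOf x ∧ l.idxOf x < k + n := by
  by_cases hk : x ∈ l.take k
  · have hxk := (mem_take_iff_idxOf_lt hx).mp hk
    have hxd : x ∉ l.drop k := fun h => disjoint_take_drop hl le_rfl hk h
    grind [mem_of_mem_take]
  · have hxk : k ≤ l.idxOf x := by grind [mem_take_iff_idxOf_lt]
    have hd : x ∈ l.drop k := by grind [take_append_drop]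
    have hidx : l.idxOf x = k + (l.drop k).idxOf x := by
      conv_lhs => rw [← take_append_drop k l]
      rw [idxOf_append_of_notMem hk]
      grind
    rw [mem_take_iff_idxOf_lt hd]
    omega

theorem Nodup.mem_take_drop_of_idxOf_le_of_le {l : List α} (hl : l.Nodup) {k n : ℕ} {x y z : α}
    (hx : x ∈ (l.drop k).take n) (hz : z ∈ (l.drop k).take n) (hy : y ∈ l)
    (hxy : l.idxOf x ≤ l.idxOf y) (hyz : l.idxOf y ≤ l.idxOf z) : y ∈ (l.drop k).take n := by
  have hxl : x ∈ l := mem_of_mem_drop (mem_of_mem_take hx)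
  have hzl : z ∈ l := mem_of_mem_drop (mem_of_mem_take hz)
  rw [hl.mem_take_drop_iff hxl] at hx
  rw [hl.mem_take_drop_iff hzl] at hz
  rw [hl.mem_take_drop_iff hy]
  omega

end List

section Preferences

variable {α : Type*} [DecidableEq α] {l₁ l₂ : List α}

theorem prefersOver_sublist_iff (hs : l₁ <+ l₂) (hl : l₂.Nodup) {x : α} {o : Option α}
    (hx : x ∈ l₁) (ho : ∀ y, o = some y → y ∈ l₁) : prefersOver l₁ x o ↔ prefersOver l₂ x o := by
  refine ⟨fun h => ⟨hs.subset h.1, fun y hy => ?_⟩, fun h => ⟨hx, fun y hy => ?_⟩⟩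
  · exact (hs.idxOf_lt_idxOf_iff hl hx (ho y hy)).1 (h.2 y hy)
  · exact (hs.idxOf_lt_idxOf_iff hl hx (ho y hy)).2 (h.2 y hy)

theorem weaklyPrefers.of_sublist (hs : l₁ <+ l₂) (hl : l₂.Nodup) {o₁ o₂ : Option α}
    (h₁ : ∀ x, o₁ = some x → x ∈ l₁) (h₂ : ∀ y, o₂ = some y → y ∈ l₁)
    (h : weaklyPrefers l₁ o₁ o₂) : weaklyPrefers l₂ o₁ o₂ := by
  intro y hy
  obtain ⟨x, hx, hle⟩ := h y hy
  exact ⟨x, hx, (hs.idxOf_le_idxOf_iff hl (h₁ x hx) (h₂ y hy)).1 hle⟩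

end Preferences

namespace SMatching

def symm {R H : Type*} (μ : SMatching R H) : SMatching H R :=
  ⟨μ.mh, μ.mr, fun h r => (μ.consistent r h).symm⟩

theorem exists_mh_of_forall_exists_mr {R H : Type*} [Fintype R] [Fintype H]
    (hcard : Fintype.card R = Fintype.card H) (μ : SMatching R H)
    (hall : ∀ r, ∃ h, μ.mr r = some h) (h : H) : ∃ r, μ.mh h = some r := by
  choose g hg using hall
  have hg' : ∀ r, μ.mh (g r) = some r := fun r => (μ.consistent r (g r)).mp (hg r)
  have hinj : Function.Injective g := fun r₁ r₂ e => Option.some_inj.mp <| by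
    rw [← hg' r₁, ← hg' r₂, e]
  obtain ⟨r, rfl⟩ := ((Fintype.bijective_iff_injective_and_card g).mpr ⟨hinj, hcard⟩).2 h
  exact ⟨r, hg' r⟩

end SMatching

namespace SMInstance

def IsRestriction (Ihat I : SMInstance R H) : Prop :=
  (∀ h, Ihat.Lh h <+ I.Lh h) ∧
    ∀ r, Ihat.Lr r = (I.Lr r).filter (fun h => decide (r ∈ Ihat.Lh h))

theorem IsRestriction.lr_sublist {R H : Type*} [DecidableEq R] {I Ihat : SMInstance R H}
    (hres : Ihat.IsRestriction I) (r : R) : Ihat.Lr r <+ I.Lr r :=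
  hres.2 r ▸ List.filter_sublist

theorem IsRestriction.mem_lr_iff {R H : Type*} [DecidableEq R] {I Ihat : SMInstance R H}
    (hres : Ihat.IsRestriction I) {r : R} {h : H} :
    h ∈ Ihat.Lr r ↔ h ∈ I.Lr r ∧ r ∈ Ihat.Lh h := by
  simp [hres.2 r]

theorem IsRestriction.existsIn {R H : Type*} [DecidableEq R] {I Ihat : SMInstance R H}
    (hres : Ihat.IsRestriction I) {ν : SMatching R H}
    (hν : Ihat.ExistsIn ν) : I.ExistsIn ν :=
  ⟨fun r h e => (hres.lr_sublist r).subset (hν.1 r h e),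
    fun h r e => (hres.1 h).subset (hν.2 h r e)⟩

variable {I Ihat : SMInstance R H}

theorem IsRestriction.blocking_iff (hres : Ihat.IsRestriction I) (hN : I.Nodups)
    {ν : SMatching R H} (hν : Ihat.ExistsIn ν) {r : R} {h : H} :
    Ihat.Blocking ν r h ↔ I.Blocking ν r h ∧ r ∈ Ihat.Lh h := by
  have key : h ∈ Ihat.Lr r → r ∈ Ihat.Lh h → (Ihat.Blocking ν r h ↔ I.Blocking ν r h) :=
    fun hh hr => and_congr
      (prefersOver_sublist_iff (hres.lr_sublist r) (hN.1 r) hh (hν.1 r))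
      (prefersOver_sublist_iff (hres.1 h) (hN.2 h) hr (hν.2 h))
  constructor
  · intro hb
    exact ⟨(key hb.1.1 hb.2.1).1 hb, hb.2.1⟩
  · rintro ⟨hb, hr⟩
    have hh : h ∈ Ihat.Lr r := hres.mem_lr_iff.2 ⟨hb.1.1, hr⟩
    exact (key hh hr).2 hb

theorem IsRestriction.isStable (hres : Ihat.IsRestriction I) (hN : I.Nodups)
    {μ : SMatching R H} (hμ : ∀ r h, ¬ I.Blocking μ r h) (hex : Ihat.ExistsIn μ) :
    Ihat.IsStable μ :=
  ⟨hex, fun r h hb => hμ r h ((hres.blocking_iff hN hex).1 hb).1⟩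

theorem exists_mr_of_complete [Fintype R] [Fintype H] (hcard : Fintype.card R = Fintype.card H)
    (hC : I.Complete) {μ : SMatching R H} (hμ : ∀ r h, ¬ I.Blocking μ r h) (r : R) :
    ∃ h, μ.mr r = some h := by
  by_contra! hr
  have hH : ∀ h, ∃ r', μ.mh h = some r' := by
    intro h
    by_contra! hh
    exact hμ r h ⟨⟨hC.1 r h, fun y hy => absurd hy (hr y)⟩,
      ⟨hC.2 h r, fun y hy => absurd hy (hh y)⟩⟩
  obtain ⟨h, e⟩ := μ.symm.exists_mh_of_forall_exists_mr hcard.symm hH r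
  exact hr h e

theorem IsRestriction.not_blocking_of_window (hres : Ihat.IsRestriction I) (hN : I.Nodups)
    {μ ν : SMatching R H} (hμ : ∀ r h, ¬ I.Blocking μ r h) (hν : Ihat.IsStable ν)
    (hbetter : ∀ r, weaklyPrefers (I.Lr r) (ν.mr r) (μ.mr r)) {h : H} {k n : ℕ}
    (hw : Ihat.Lh h = ((I.Lh h).drop k).take n) {rμ r₀ : R} (hrμ : μ.mh h = some rμ)
    (hrμw : rμ ∈ Ihat.Lh h) (hr₀ : ν.mh h = some r₀) (r : R) : ¬ I.Blocking ν r h := by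
  intro hb
  by_cases hr : r ∈ Ihat.Lh h
  · exact hν.2 r h ((hres.blocking_iff hN hν.1).2 ⟨hb, hr⟩)
  have hr₀w : r₀ ∈ Ihat.Lh h := hν.1.2 h r₀ hr₀
  -- `r` is outside the window of `h` but ranked above `r₀`, which is inside it
  have hlt : (I.Lh h).idxOf r < (I.Lh h).idxOf rμ := by
    by_contra! hle
    rw [hw] at hr hr₀w hrμw
    exact hr ((hN.2 h).mem_take_drop_of_idxOf_le_of_le hrμw hr₀w hb.2.1 hle
      (hb.2.2 r₀ hr₀).le)
  refine hμ r h ⟨⟨hb.1.1, fun hμr e => ?_⟩, ⟨hb.2.1, fun y e => ?_⟩⟩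
  · obtain ⟨h₀, e₀, hle⟩ := hbetter r hμr e
    exact (hb.1.2 h₀ e₀).trans_le hle
  · cases hrμ.symm.trans e
    exact hlt

end SMInstance

/-- **WDA correctness.** If a stable matching `μ` of the complete-list
instance `I` survives in the window-truncated instance `Ihat`, then the resident-optimal
stable matching `muHat` of `Ihat` is stable in `I` and matches all residents. -/
theorem WDA_correct
    {R H : Type*} [DecidableEq R] [DecidableEq H] [Fintype R] [Fintype H]
    (hcard : Fintype.card R = Fintype.card H)
    (I Ihat : SMInstance R H) (hC : I.Complete) (hN : I.Nodups)
    (μ : SMatching R H) (hμ : I.IsStable μ)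
    (hwin : ∀ h, ∃ k l, Ihat.Lh h = ((I.Lh h).drop k).take l)
    (hsurv : ∀ h r, μ.mh h = some r → r ∈ Ihat.Lh h)
    (hLr : ∀ r, Ihat.Lr r = (I.Lr r).filter (fun h => decide (r ∈ Ihat.Lh h)))
    (muHat : SMatching R H) (hhat : Ihat.IsStable muHat)
    (hopt : ∀ ν : SMatching R H, Ihat.IsStable ν →
      ∀ r, weaklyPrefers (Ihat.Lr r) (muHat.mr r) (ν.mr r)) :
    I.IsStable muHat ∧ ∀ r, muHat.mr r ≠ none := by
  have hres : Ihat.IsRestriction I := ⟨fun h => by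
    obtain ⟨k, n, hw⟩ := hwin h
    exact hw ▸ (List.take_sublist _ _).trans (List.drop_sublist _ _), hLr⟩
  have hμhat : Ihat.IsStable μ := hres.isStable hN hμ.2
    ⟨fun r h e => hres.mem_lr_iff.2 ⟨hC.1 r h, hsurv h r ((μ.consistent r h).1 e)⟩, hsurv⟩
  have hbetter : ∀ r, weaklyPrefers (I.Lr r) (muHat.mr r) (μ.mr r) := fun r =>
    (hopt μ hμhat r).of_sublist (hres.lr_sublist r) (hN.1 r) (hhat.1.1 r) (hμhat.1.1 r)
  have hμR := I.exists_mr_of_complete hcard hC hμ.2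
  have hmatched : ∀ r, ∃ h, muHat.mr r = some h := fun r => by
    obtain ⟨h, e⟩ := hμR r
    obtain ⟨h', e', -⟩ := hbetter r h e
    exact ⟨h', e'⟩
  refine ⟨⟨hres.existsIn hhat.1, fun r h => ?_⟩, fun r => ?_⟩
  · obtain ⟨k, n, hw⟩ := hwin h
    obtain ⟨rμ, hrμ⟩ := μ.exists_mh_of_forall_exists_mr hcard hμR h
    obtain ⟨r₀, hr₀⟩ := muHat.exists_mh_of_forall_exists_mr hcard hmatched h
    exact hres.not_blocking_of_window hN hμ.2 hhat hbetter hw hrμ (hsurv h rμ hrμ) hr₀ r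
  · obtain ⟨h, e⟩ := hmatched r
    simp [e]
end

section
/- PDA certificate: Let I be a complete-list instance with n residents and n hospitals, and Î the prefix-truncated instance where hospital h keeps its top ρ_h choices. If a hospital h is left unmatched by resident-proposing deferred acceptance on Î, then h is under-predicted in I, i.e., the hospital-optimal stable matching μ*_H of I satisfies rank(L(h), μ*_H(h)) > ρ_h. -/
variable {R H : Type*} [DecidableEq R] [DecidableEq H]

theorem List.idxOf_filter_lt_idxOf_filter_iff {α : Type*} [DecidableEq α] {p : α → Bool}
    {a b : α} (ha : p a) (hb : p b) (l : List α) :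
    (l.filter p).idxOf a < (l.filter p).idxOf b ↔ l.idxOf a < l.idxOf b := by
  induction l with
  | nil => simp
  | cons x l ih =>
    by_cases hx : p x
    · rw [List.filter_cons_of_pos hx]
      by_cases hxa : x = a <;> by_cases hxb : x = b <;> simp_all [List.idxOf_cons_ne]
    · have hxa : x ≠ a := by rintro rfl; exact hx ha
      have hxb : x ≠ b := by rintro rfl; exact hx hb
      rw [List.filter_cons_of_neg hx, List.idxOf_cons_ne _ hxa, List.idxOf_cons_ne _ hxb, ih]
      omega

theorem not_prefersOver_some_self {α : Type*} [DecidableEq α] (l : List α) (x : α) :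
    ¬ prefersOver l x (some x) :=
  fun h => lt_irrefl _ (h.2 x rfl)

theorem exists_idxOf_lt_of_not_prefersOver {α : Type*} [DecidableEq α] {l : List α} {x : α}
    {o : Option α} (hx : x ∈ l) (hpref : ¬ prefersOver l x o) (hne : o ≠ some x) :
    ∃ y, o = some y ∧ l.idxOf y < l.idxOf x := by
  simp only [prefersOver, hx, true_and, not_forall, not_lt] at hpref
  obtain ⟨y, rfl, hle⟩ := hpref
  have hyx : l.idxOf x ≠ l.idxOf y := fun h => hne (by rw [(List.idxOf_inj hx).1 h])
  exact ⟨y, rfl, lt_of_le_of_ne hle hyx.symm⟩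

namespace SMatching

omit [DecidableEq R] [DecidableEq H]

theorem eq_of_mr_eq_some_s11 (μ : SMatching R H) {r₁ r₂ : R} {h : H} (h₁ : μ.mr r₁ = some h)
    (h₂ : μ.mr r₂ = some h) : r₁ = r₂ := by
  rw [μ.consistent] at h₁ h₂
  exact Option.some_injective _ (h₁.symm.trans h₂)

theorem eq_of_mh_eq_some (μ : SMatching R H) {h₁ h₂ : H} {r : R} (e₁ : μ.mh h₁ = some r)
    (e₂ : μ.mh h₂ = some r) : h₁ = h₂ := by
  rw [← μ.consistent] at e₁ e₂
  exact Option.some_injective _ (e₁.symm.trans e₂)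

theorem exists_mh_eq_some_of_closed [Finite R] (μ ν : SMatching R H) {S : Set R}
    (hS : ∀ r ∈ S, ∃ h, ν.mr r = some h ∧ ∃ r' ∈ S, μ.mh h = some r')
    {h : H} {r : R} (hr : r ∈ S) (hμ : μ.mh h = some r) : ∃ r₀ ∈ S, ν.mh h = some r₀ := by
  have : Nonempty H := ⟨h⟩
  choose! k hk f hfS hf using hS
  have hinj : Set.InjOn f S := fun r₁ h₁ r₂ h₂ he =>
    ν.eq_of_mr_eq_some_s11 (hk r₁ h₁)
      (μ.eq_of_mh_eq_some (hf r₁ h₁) (he ▸ hf r₂ h₂) ▸ hk r₂ h₂)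
  obtain ⟨r₀, hr₀, rfl⟩ := ((S.toFinite.injOn_iff_bijOn_of_mapsTo hfS).1 hinj).surjOn hr
  obtain rfl : k r₀ = h := μ.eq_of_mh_eq_some (hf r₀ hr₀) hμ
  exact ⟨r₀, hr₀, (ν.consistent _ _).1 (hk r₀ hr₀)⟩

end SMatching

namespace SMInstance

theorem IsStable.exists_mr_idxOf_lt {J : SMInstance R H} {μ : SMatching R H} (hμ : J.IsStable μ)
    {r : R} {h : H} (hh : h ∈ J.Lr r) (hpref : prefersOver (J.Lh h) r (μ.mh h)) :
    ∃ h', μ.mr r = some h' ∧ (J.Lr r).idxOf h' < (J.Lr r).idxOf h :=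
  exists_idxOf_lt_of_not_prefersOver hh (fun hr => hμ.2 r h ⟨hr, hpref⟩)
    fun he => not_prefersOver_some_self _ _ ((μ.consistent r h).1 he ▸ hpref)

theorem IsStable.exists_mh_idxOf_lt {J : SMInstance R H} {μ : SMatching R H} (hμ : J.IsStable μ)
    {r : R} {h : H} (hr : r ∈ J.Lh h) (hpref : prefersOver (J.Lr r) h (μ.mr r)) :
    ∃ r', μ.mh h = some r' ∧ (J.Lh h).idxOf r' < (J.Lh h).idxOf r :=
  exists_idxOf_lt_of_not_prefersOver hr (fun hh => hμ.2 r h ⟨hpref, hh⟩)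
    fun he => not_prefersOver_some_self _ _ ((μ.consistent r h).2 he ▸ hpref)

def IsTruncation (Ihat I : SMInstance R H) (ρ : H → ℕ) : Prop :=
  (∀ h, Ihat.Lh h = (I.Lh h).take (ρ h)) ∧
    ∀ r, Ihat.Lr r = (I.Lr r).filter (fun h => decide (r ∈ Ihat.Lh h))

def improvers (I : SMInstance R H) (ν μ : SMatching R H) : Set R :=
  {r | ∃ h, ν.mr r = some h ∧ prefersOver (I.Lr r) h (μ.mr r)}

namespace IsTruncation

variable {Ihat I : SMInstance R H} {ρ : H → ℕ}

omit [DecidableEq H] in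
theorem mem_Lh_iff (hT : Ihat.IsTruncation I ρ) {r : R} {h : H} (hr : r ∈ I.Lh h) :
    r ∈ Ihat.Lh h ↔ (I.Lh h).idxOf r < ρ h := by
  rw [hT.1, List.mem_take_iff_idxOf_lt hr]

omit [DecidableEq H] in
theorem idxOf_Lh (hT : Ihat.IsTruncation I ρ) {r : R} {h : H} (hr : r ∈ Ihat.Lh h) :
    (Ihat.Lh h).idxOf r = (I.Lh h).idxOf r := by
  rw [hT.1] at hr ⊢
  exact (List.take_prefix _ _).idxOf_eq_of_mem hr

omit [DecidableEq H] in
theorem mem_Lr_iff (hT : Ihat.IsTruncation I ρ) {r : R} {h : H} :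
    h ∈ Ihat.Lr r ↔ h ∈ I.Lr r ∧ r ∈ Ihat.Lh h := by
  rw [hT.2, List.mem_filter, decide_eq_true_iff]

theorem idxOf_Lr_lt_iff (hT : Ihat.IsTruncation I ρ) {r : R} {h₁ h₂ : H} (h₁r : h₁ ∈ Ihat.Lr r)
    (h₂r : h₂ ∈ Ihat.Lr r) :
    (Ihat.Lr r).idxOf h₁ < (Ihat.Lr r).idxOf h₂ ↔ (I.Lr r).idxOf h₁ < (I.Lr r).idxOf h₂ := by
  rw [hT.2]
  exact List.idxOf_filter_lt_idxOf_filter_iff (a := h₁) (b := h₂)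
    (decide_eq_true (hT.mem_Lr_iff.1 h₁r).2) (decide_eq_true (hT.mem_Lr_iff.1 h₂r).2) _

theorem mem_improvers (hT : Ihat.IsTruncation I ρ) (hC : I.Complete) {ν μ : SMatching R H}
    (hν : Ihat.IsStable ν) {r : R} {h : H} (hr : r ∈ Ihat.Lh h)
    (hpref : prefersOver (Ihat.Lh h) r (ν.mh h)) (hμ : μ.mr r = some h) :
    r ∈ I.improvers ν μ := by
  have hh : h ∈ Ihat.Lr r := hT.mem_Lr_iff.2 ⟨hC.1 r h, hr⟩
  obtain ⟨h', hν', hlt⟩ := hν.exists_mr_idxOf_lt hh hpref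
  refine ⟨h', hν', hC.1 r h', fun y hy => ?_⟩
  obtain rfl : h = y := Option.some_injective _ (hμ.symm.trans hy)
  exact (hT.idxOf_Lr_lt_iff (hν.1.1 r h' hν') hh).1 hlt

theorem improvers_closed (hT : Ihat.IsTruncation I ρ) (hC : I.Complete) {ν μ : SMatching R H}
    (hν : Ihat.IsStable ν) (hμ : I.IsStable μ) :
    ∀ r ∈ I.improvers ν μ, ∃ h, ν.mr r = some h ∧ ∃ r' ∈ I.improvers ν μ, μ.mh h = some r' := by
  rintro r ⟨h, hνr, hpref⟩
  obtain ⟨r', hμr', hlt⟩ := hμ.exists_mh_idxOf_lt (hC.2 h r) hpref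
  have hνh : ν.mh h = some r := (ν.consistent r h).1 hνr
  have hr : r ∈ Ihat.Lh h := hν.1.2 h r hνh
  have hr' : r' ∈ Ihat.Lh h := (hT.mem_Lh_iff (hC.2 h r')).2
    (hlt.trans ((hT.mem_Lh_iff (hC.2 h r)).1 hr))
  have hpref' : prefersOver (Ihat.Lh h) r' (ν.mh h) := by
    refine ⟨hr', fun y hy => ?_⟩
    obtain rfl : r = y := Option.some_injective _ (hνh.symm.trans hy)
    rwa [hT.idxOf_Lh hr', hT.idxOf_Lh hr]
  exact ⟨h, hνr, r', hT.mem_improvers hC hν hr' hpref' ((μ.consistent r' h).2 hμr'), hμr'⟩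

end IsTruncation

end SMInstance

theorem PDA_unmatched_implies_underpredicted_general
    {R H : Type*} [DecidableEq R] [DecidableEq H] [Fintype R]
    (I Ihat : SMInstance R H) (hC : I.Complete)
    (ρ : H → ℕ)
    (hLh : ∀ h, Ihat.Lh h = (I.Lh h).take (ρ h))
    (hLr : ∀ r, Ihat.Lr r = (I.Lr r).filter (fun h => decide (r ∈ Ihat.Lh h)))
    (muH : SMatching R H) (hHstab : I.IsStable muH)
    (muHat : SMatching R H) (hhat : Ihat.IsStable muHat)
    (h : H) (hun : muHat.mh h = none) :
    ∀ r, muH.mh h = some r → ρ h < (I.Lh h).idxOf r + 1 := by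
  intro r hr
  by_contra! hle
  have hT : Ihat.IsTruncation I ρ := ⟨hLh, hLr⟩
  have hmem : r ∈ Ihat.Lh h := (hT.mem_Lh_iff (hC.2 h r)).2 (by omega)
  have himp : r ∈ I.improvers muHat muH :=
    hT.mem_improvers hC hhat hmem ⟨hmem, by simp [hun]⟩ ((muH.consistent r h).2 hr)
  obtain ⟨r₀, -, hr₀⟩ :=
    muH.exists_mh_eq_some_of_closed muHat (hT.improvers_closed hC hhat hHstab) himp hr
  simp [hun] at hr₀

/-- **PDA certificate.** If a hospital `h` is left unmatched by the
resident-optimal stable matching `muHat` of the prefix-truncated instance `Ihat` (the output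
of resident-proposing deferred acceptance on `Ihat`), then `h` is under-predicted: the rank
of its partner in the hospital-optimal stable matching `muH` of `I` exceeds `ρ h`. -/
theorem PDA_unmatched_implies_underpredicted
    {R H : Type*} [DecidableEq R] [DecidableEq H] [Fintype R] [Fintype H]
    (hcard : Fintype.card R = Fintype.card H)
    (I Ihat : SMInstance R H) (hC : I.Complete) (hN : I.Nodups)
    (ρ : H → ℕ)
    (hLh : ∀ h, Ihat.Lh h = (I.Lh h).take (ρ h))
    (hLr : ∀ r, Ihat.Lr r = (I.Lr r).filter (fun h => decide (r ∈ Ihat.Lh h)))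
    (muH : SMatching R H) (hHstab : I.IsStable muH)
    (hHopt : ∀ ν : SMatching R H, I.IsStable ν →
      ∀ h, weaklyPrefers (I.Lh h) (muH.mh h) (ν.mh h))
    (muHat : SMatching R H) (hhat : Ihat.IsStable muHat)
    (hropt : ∀ ν : SMatching R H, Ihat.IsStable ν →
      ∀ r, weaklyPrefers (Ihat.Lr r) (muHat.mr r) (ν.mr r))
    (h : H) (hun : muHat.mh h = none) :
    ∀ r, muH.mh h = some r → ρ h < (I.Lh h).idxOf r + 1 :=
  PDA_unmatched_implies_underpredicted_general I Ihat hC ρ hLh hLr muH hHstab muHat hhat h hun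
end
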